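/- Let (s_n)_{n≥1} be a sequence of polarizations, written s_n = (ê_n, r_n) with ê_n ∈ 𝕊^{d-1} and r_n ∈ [0,∞). If liminf_{n→∞} r_n > 0, then there exists a Lebesgue measurable set X ⊆ ℝ^d of finite measure with m(X Δ X⋆) > 0 such that X^{s_n} = X (up to null sets) for every n; in particular, the sequence of successive polarizations (X^{s_1…s_n})_{n≥1} is constantly equal to X and does not converge to X⋆. -/
import Mathlib


open MeasureTheory ProbabilityTheory Filter Topology RealInnerProductSpace

noncomputable section

abbrev Euc (d : ℕ) : Type := EuclideanSpace ℝ (Fin d)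

def polarize {d : ℕ} (e : Euc d) (r : ℝ) (X : Set (Euc d)) : Set (Euc d) :=
  {x | (⟪x, e⟫ ≤ r ∧ (x ∈ X ∨ x - (2 * (⟪x, e⟫ - r)) • e ∈ X)) ∨
       (r < ⟪x, e⟫ ∧ x ∈ X ∧ x - (2 * (⟪x, e⟫ - r)) • e ∈ X)}

def IsSphericalRearrangement {d : ℕ} (star : Set (Euc d) → Set (Euc d)) : Prop :=
  ∀ A : Set (Euc d), MeasurableSet A → volume A < ⊤ →
    (∃ R : ℝ, star A = Metric.ball (0 : Euc d) R) ∧ volume (star A) = volume A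

def detIter {α S : Type*} (op : S → α → α) (X : α) (u : ℕ → S) : ℕ → α
  | 0 => op (u 0) X
  | n + 1 => op (u (n + 1)) (detIter op X u n)

lemma inner_reflect {d : ℕ} {e : Euc d} (he : ‖e‖ = 1) (x : Euc d) (r : ℝ) :
    ⟪x - (2 * (⟪x, e⟫ - r)) • e, e⟫ = 2 * r - ⟪x, e⟫ := by
  rw [inner_sub_left, real_inner_smul_left, real_inner_self_eq_norm_sq, he]
  ring

lemma norm_reflect_zero {d : ℕ} {e : Euc d} (he : ‖e‖ = 1) (x : Euc d) :
    ‖x - (2 * (⟪x, e⟫ - 0)) • e‖ = ‖x‖ := by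
  have h2 : ‖x - (2 * (⟪x, e⟫ - 0)) • e‖ ^ 2 = ‖x‖ ^ 2 := by
    rw [norm_sub_sq_real, real_inner_smul_right, norm_smul, he, mul_one,
      Real.norm_eq_abs, sq_abs]
    ring
  rw [← Real.sqrt_sq (norm_nonneg (x - (2 * (⟪x, e⟫ - 0)) • e)),
    ← Real.sqrt_sq (norm_nonneg x), h2]

lemma polarize_eq_self_of_le {d : ℕ} {e : Euc d} (he : ‖e‖ = 1) {r ρ : ℝ}
    (hρr : ρ ≤ r) {X : Set (Euc d)} (hX : X ⊆ Metric.ball 0 ρ) :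
    polarize e r X = X := by
  have key : ∀ x ∈ X, ⟪x, e⟫ < r := by
    intro x hx
    have h1 : ⟪x, e⟫ ≤ ‖x‖ * ‖e‖ := real_inner_le_norm x e
    have h2 : ‖x‖ < ρ := by simpa using mem_ball_zero_iff.mp (hX hx)
    rw [he, mul_one] at h1
    linarith
  ext x
  simp only [polarize, Set.mem_setOf_eq]
  constructor
  · rintro (⟨hle, hx | hσ⟩ | ⟨hlt, hx, _⟩)
    · exact hx
    · exfalso
      have h1 := inner_reflect he x r
      have h2 := key _ hσ
      rw [h1] at h2
      linarith
    · exact hx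
  · intro hx
    exact Or.inl ⟨le_of_lt (key x hx), Or.inl hx⟩

lemma polarize_zero_eq_self {d : ℕ} {e : Euc d} (he : ‖e‖ = 1) {X : Set (Euc d)}
    (hX : ∀ x y : Euc d, ‖x‖ = ‖y‖ → (x ∈ X ↔ y ∈ X)) :
    polarize e 0 X = X := by
  ext x
  have hm : (x - (2 * (⟪x, e⟫ - 0)) • e ∈ X) ↔ x ∈ X :=
    hX _ _ (norm_reflect_zero he x)
  simp only [polarize, Set.mem_setOf_eq]
  rw [hm]
  rcases le_or_gt (⟪x, e⟫ : ℝ) 0 with h | h <;> tauto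

/-- If a sequence of polarizations `s_n = (ê_n, r_n)` satisfies
`liminf r_n > 0`, then there is a measurable set `X` of finite measure, differing from
its spherical rearrangement, which is fixed (up to null sets) by every `s_n`; in
particular the successive polarizations are constantly equal to `X` (up to null sets)
and do not converge to `X⋆`. -/
theorem statement16 {d : ℕ} (hd : 1 ≤ d)
    (star : Set (Euc d) → Set (Euc d)) (hstar : IsSphericalRearrangement star)
    (e : ℕ → Metric.sphere (0 : Euc d) 1) (r : ℕ → ℝ) (hr : ∀ n, 0 ≤ r n)
    (hliminf : ∃ c : ℝ, 0 < c ∧ ∀ᶠ n in atTop, c ≤ r n) :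
    ∃ X : Set (Euc d), MeasurableSet X ∧ volume X < ⊤ ∧
      0 < volume (symmDiff X (star X)) ∧
      (∀ n : ℕ, volume (symmDiff (polarize ((e n : Euc d)) (r n) X) X) = 0) ∧
      (∀ n : ℕ,
        volume (symmDiff
          (detIter (fun k Y => polarize ((e k : Euc d)) (r k) Y) X (fun k => k) n) X)
          = 0) ∧
      ¬ Tendsto
        (fun n => volume (symmDiff
          (detIter (fun k Y => polarize ((e k : Euc d)) (r k) Y) X (fun k => k) n)
          (star X)))
        atTop (nhds 0) := by
  obtain ⟨c, hc, hev⟩ := hliminf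
  rw [eventually_atTop] at hev
  obtain ⟨N, hN⟩ := hev
  -- the positive radius ρ
  set g : ℕ → ℝ := fun n => if 0 < r n ∧ r n < c then r n else c with hg
  set s : Finset ℝ := insert c ((Finset.range N).image g) with hs
  have hsne : s.Nonempty := ⟨c, Finset.mem_insert_self _ _⟩
  set ρ : ℝ := s.min' hsne with hρ
  have hρpos : 0 < ρ := by
    rw [hρ, Finset.lt_min'_iff]
    intro y hy
    rw [hs, Finset.mem_insert] at hy
    rcases hy with rfl | hy
    · exact hc
    · obtain ⟨n, _, rfl⟩ := Finset.mem_image.mp hy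
      rw [hg]
      dsimp only
      split
      · next h => exact h.1
      · exact hc
  have hρc : ρ ≤ c := Finset.min'_le _ _ (Finset.mem_insert_self _ _)
  have hρrn : ∀ n, 0 < r n → ρ ≤ r n := by
    intro n hn
    by_cases hnN : n < N
    · by_cases hnc : r n < c
      · have : g n = r n := by rw [hg]; simp [hn, hnc]
        calc ρ ≤ g n := Finset.min'_le _ _ (Finset.mem_insert_of_mem
              (Finset.mem_image_of_mem g (Finset.mem_range.mpr hnN)))
          _ = r n := this
      · linarith [not_lt.mp hnc]
    · exact hρc.trans (hN n (not_lt.mp hnN))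
  -- the set X
  set X : Set (Euc d) := Metric.ball (0 : Euc d) ρ \ Metric.ball 0 (ρ / 2) with hXdef
  have hXmeas : MeasurableSet X := measurableSet_ball.diff measurableSet_ball
  have hXfin : volume X < ⊤ :=
    lt_of_le_of_lt (measure_mono Set.diff_subset) measure_ball_lt_top
  have hXnorm : ∀ x y : Euc d, ‖x‖ = ‖y‖ → (x ∈ X ↔ y ∈ X) := by
    intro x y hxy
    rw [hXdef]
    simp only [Set.mem_diff, mem_ball_zero_iff, hxy]
  have hXsub : X ⊆ Metric.ball 0 ρ := Set.diff_subset
  -- X is fixed by every polarization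
  have hfix : ∀ n, polarize ((e n : Euc d)) (r n) X = X := by
    intro n
    have he : ‖(e n : Euc d)‖ = 1 := by
      have := (e n).2
      rwa [mem_sphere_zero_iff_norm] at this
    rcases eq_or_lt_of_le (hr n) with h0 | hpos
    · rw [← h0]
      exact polarize_zero_eq_self he hXnorm
    · exact polarize_eq_self_of_le he (hρrn n hpos) hXsub
  have hiter : ∀ n,
      detIter (fun k Y => polarize ((e k : Euc d)) (r k) Y) X (fun k => k) n = X := by
    intro n
    induction n with
    | zero => simp [detIter, hfix 0]
    | succ m ih => simp [detIter, ih, hfix (m + 1)]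
  -- positivity of the volume of X
  have hFin : Nonempty (Fin d) := ⟨⟨0, hd⟩⟩
  set x₀ : Euc d := EuclideanSpace.single (⟨0, hd⟩ : Fin d) (3 * ρ / 4) with hx₀
  have hx₀norm : ‖x₀‖ = 3 * ρ / 4 := by
    rw [hx₀, EuclideanSpace.norm_single, Real.norm_eq_abs, abs_of_nonneg (by linarith)]
  have hsubX : Metric.ball x₀ (ρ / 8) ⊆ X := by
    intro y hy
    rw [Metric.mem_ball, dist_eq_norm] at hy
    have h1 : ‖y‖ < ρ := by
      calc ‖y‖ = ‖y - x₀ + x₀‖ := by rw [sub_add_cancel]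
        _ ≤ ‖y - x₀‖ + ‖x₀‖ := norm_add_le _ _
        _ < ρ / 8 + 3 * ρ / 4 := by rw [hx₀norm]; linarith
        _ ≤ ρ := by linarith
    have h2 : ¬ ‖y‖ < ρ / 2 := by
      have h3 : ‖x₀‖ - ‖y‖ ≤ ‖x₀ - y‖ := norm_sub_norm_le _ _
      rw [norm_sub_rev] at h3
      rw [hx₀norm] at h3
      intro hlt
      linarith
    rw [hXdef]
    simp only [Set.mem_diff, mem_ball_zero_iff]
    exact ⟨h1, h2⟩
  have hXpos : 0 < volume X :=
    lt_of_lt_of_le (Metric.measure_ball_pos _ _ (by linarith)) (measure_mono hsubX)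
  -- the rearrangement
  obtain ⟨⟨R, hR⟩, hvol⟩ := hstar X hXmeas hXfin
  have hRpos : 0 < R := by
    by_contra hR0
    have : volume (star X) = 0 := by
      rw [hR, Metric.ball_eq_empty.mpr (not_lt.mp hR0)]
      simp
    rw [hvol] at this
    exact absurd this hXpos.ne'
  have hdiffpos : 0 < volume (symmDiff X (star X)) := by
    have hsub2 : Metric.ball (0 : Euc d) (min R (ρ / 2)) ⊆ symmDiff X (star X) := by
      intro y hy
      rw [mem_ball_zero_iff] at hy
      have hy1 : y ∈ star X := by
        rw [hR, mem_ball_zero_iff]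
        exact lt_of_lt_of_le hy (min_le_left _ _)
      have hy2 : y ∉ X := by
        rw [hXdef]
        simp only [Set.mem_diff, mem_ball_zero_iff, not_and, not_not]
        intro _
        exact lt_of_lt_of_le hy (min_le_right _ _)
      rw [Set.mem_symmDiff]
      exact Or.inr ⟨hy1, hy2⟩
    exact lt_of_lt_of_le
      (Metric.measure_ball_pos _ _ (lt_min hRpos (by linarith))) (measure_mono hsub2)
  refine ⟨X, hXmeas, hXfin, hdiffpos, ?_, ?_, ?_⟩
  · intro n
    rw [hfix n, symmDiff_self]
    simp
  · intro n
    rw [hiter n, symmDiff_self]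
    simp
  · intro hT
    simp only [hiter] at hT
    have := tendsto_nhds_unique hT tendsto_const_nhds
    exact absurd this.symm hdiffpos.ne'
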